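/- Let b ≥ 1 be an integer and s0 > b/2 a real number. There exists a constant K0 ≥ 1, depending only on b and s0, such that, defining for s ≥ 0 and u : ℤ^b → ℂ the weighted norm ‖u‖_s := (K0 · Σ_{i∈ℤ^b} |u_i|² ⟨i⟩^{2s})^{1/2}, the following holds: for every s ≥ s0 there is a constant C(s) ≥ 1 with C(s0) = 1 such that for all u, v : ℤ^b → ℂ with ‖u‖_s < ∞ and ‖v‖_s < ∞, the convolution (u*v)_i := Σ_{m∈ℤ^b} u_m v_{i−m} converges absolutely for every i and ‖u*v‖_s ≤ (1/2)‖u‖_{s0}‖v‖_s + (C(s)/2)‖u‖_s‖v‖_{s0}. Moreover, for any fixed s1 ≥ s0, the constant K0 can be chosen (depending also on s1) so that in addition C(s) = 1 for all s ∈ [s0, s1]. -/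

import Mathlib

open scoped BigOperators

namespace Stmt0

/-- ⟨i⟩ := max(|i|,1), with |i| the sup-norm of i ∈ ℤ^b. -/
def wt {b : ℕ} (i : Fin b → ℤ) : ℕ := max (Finset.univ.sup fun t => (i t).natAbs) 1

/-- square of the weighted norm ‖u‖_s² := K0 · Σ_i |u_i|² ⟨i⟩^{2s} -/
noncomputable def wNormSq (b : ℕ) (K0 s : ℝ) (u : (Fin b → ℤ) → ℂ) : ℝ :=
  K0 * ∑' i : Fin b → ℤ, ‖u i‖ ^ 2 * (wt i : ℝ) ^ (2 * s)

noncomputable def wNorm (b : ℕ) (K0 s : ℝ) (u : (Fin b → ℤ) → ℂ) : ℝ :=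
  Real.sqrt (wNormSq b K0 s u)

/-- ‖u‖_s < ∞ -/
def HasFiniteNorm (b : ℕ) (s : ℝ) (u : (Fin b → ℤ) → ℂ) : Prop :=
  Summable fun i : Fin b → ℤ => ‖u i‖ ^ 2 * (wt i : ℝ) ^ (2 * s)

/-- convolution (u*v)_i := Σ_m u_m v_{i−m} -/
noncomputable def conv (b : ℕ) (u v : (Fin b → ℤ) → ℂ) : (Fin b → ℤ) → ℂ :=
  fun i => ∑' m : Fin b → ℤ, u m * v (i - m)

open ENNReal MeasureTheory
open scoped NNReal


open ENNReal MeasureTheory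

lemma one_le_wt {b : ℕ} (i : Fin b → ℤ) : 1 ≤ wt i := le_max_right _ _

def wt1 (n : ℤ) : ℕ := max n.natAbs 1

lemma one_le_wt1 (n : ℤ) : 1 ≤ wt1 n := le_max_right _ _

lemma wt1_le_wt {b : ℕ} (i : Fin b → ℤ) (t : Fin b) : wt1 (i t) ≤ wt i :=
  max_le_max (Finset.le_sup (f := fun t => (i t).natAbs) (Finset.mem_univ t)) le_rfl

lemma natAbs_le_wt {b : ℕ} (i : Fin b → ℤ) (t : Fin b) : (i t).natAbs ≤ wt i :=
  le_trans (Finset.le_sup (f := fun t => (i t).natAbs) (Finset.mem_univ t)) (le_max_left _ _)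

lemma wt_triangle {b : ℕ} (i m : Fin b → ℤ) : wt i ≤ wt m + wt (i - m) := by
  refine max_le ?_ ?_
  · apply Finset.sup_le; intro t _
    have h : i t = m t + (i - m) t := by simp
    calc (i t).natAbs = (m t + (i - m) t).natAbs := by rw [← h]
      _ ≤ (m t).natAbs + ((i - m) t).natAbs := Int.natAbs_add_le _ _
      _ ≤ wt m + wt (i - m) := add_le_add (natAbs_le_wt m t) (natAbs_le_wt (i - m) t)
  · calc 1 ≤ 1 + 1 := by norm_num
      _ ≤ wt m + wt (i - m) := add_le_add (one_le_wt m) (one_le_wt (i - m))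

-- elementary ENNReal inequalities
lemma ENN.mul_le_sq_add (a c : ℝ≥0∞) : a * c ≤ a ^ 2 + c ^ 2 := by
  rcases le_total a c with h | h
  · calc a * c ≤ c * c := mul_le_mul_left h c
      _ = c ^ 2 := (sq c).symm
      _ ≤ a ^ 2 + c ^ 2 := le_add_self
  · calc a * c ≤ a * a := mul_le_mul_right h a
      _ = a ^ 2 := (sq a).symm
      _ ≤ a ^ 2 + c ^ 2 := le_self_add

lemma ENN.add_sq_le (a c : ℝ≥0∞) : (a + c) ^ 2 ≤ 4 * a ^ 2 + 4 * c ^ 2 := by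
  have h : a + c ≤ 2 * (a ⊔ c) := by
    rcases le_total a c with h | h
    · calc a + c ≤ c + c := add_le_add_left h c
        _ = 2 * c := (two_mul c).symm
        _ ≤ 2 * (a ⊔ c) := mul_le_mul_right (le_max_right _ _) 2
    · calc a + c ≤ a + a := add_le_add_right h a
        _ = 2 * a := (two_mul a).symm
        _ ≤ 2 * (a ⊔ c) := mul_le_mul_right (le_max_left _ _) 2
  calc (a + c) ^ 2 ≤ (2 * (a ⊔ c)) ^ 2 := pow_le_pow_left' h 2
    _ = 4 * (a ⊔ c) ^ 2 := by rw [mul_pow]; norm_num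
    _ ≤ 4 * (a ^ 2 + c ^ 2) := by
        apply mul_le_mul_right
        rcases le_total a c with h' | h'
        · rw [sup_eq_right.mpr h']; exact le_add_self
        · rw [sup_eq_left.mpr h']; exact le_self_add
    _ = 4 * a ^ 2 + 4 * c ^ 2 := by ring


theorem tsum_CS {α : Type*} [Countable α] (f g : α → ℝ≥0∞) :
    (∑' i, f i * g i) ≤ (∑' i, f i ^ (2:ℝ)) ^ (1/2:ℝ) * (∑' i, g i ^ (2:ℝ)) ^ (1/2:ℝ) := by
  letI : MeasurableSpace α := ⊤
  have hpq : Real.HolderConjugate 2 2 := Real.HolderConjugate.two_two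
  have h := ENNReal.lintegral_mul_le_Lp_mul_Lq (Measure.count : Measure α) hpq
    (measurable_of_countable f).aemeasurable (measurable_of_countable g).aemeasurable
  simpa [lintegral_count] using h

-- squared form
theorem tsum_CS_sq {α : Type*} [Countable α] (f g : α → ℝ≥0∞) :
    (∑' i, f i * g i) ^ 2 ≤ (∑' i, f i ^ 2) * (∑' i, g i ^ 2) := by
  have h := tsum_CS f g
  have h2 : (∑' i, f i * g i) ^ 2 ≤ ((∑' i, f i ^ (2:ℝ)) ^ (1/2:ℝ) * (∑' i, g i ^ (2:ℝ)) ^ (1/2:ℝ)) ^ 2 := by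
    exact pow_le_pow_left' h 2
  calc (∑' i, f i * g i) ^ 2 ≤ _ := h2
    _ = (∑' i, f i ^ 2) * (∑' i, g i ^ 2) := by
        rw [mul_pow, ← ENNReal.rpow_natCast (_ ^ (1/2:ℝ)) 2, ← ENNReal.rpow_natCast (_ ^ (1/2:ℝ)) 2,
          ← ENNReal.rpow_mul, ← ENNReal.rpow_mul]
        norm_num

theorem young {α : Type*} [AddCommGroup α] [Countable α] (c d : α → ℝ≥0∞) :
    ∑' i, (∑' m, c m * d (i - m)) ^ 2 ≤ ((∑' m, c m) ^ 2) * (∑' m, d m ^ 2) := by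
  have key : ∀ i : α, (∑' m, c m * d (i - m)) ^ 2
      ≤ (∑' m, c m) * (∑' m, c m * d (i - m) ^ 2) := by
    intro i
    have h1 : ∀ m, c m * d (i - m) = (c m ^ (1/2:ℝ)) * ((c m ^ (1/2:ℝ)) * d (i - m)) := by
      intro m
      rw [← mul_assoc, ← ENNReal.rpow_add_of_nonneg _ _ (by norm_num) (by norm_num)]
      norm_num
    have h2 := tsum_CS_sq (fun m => c m ^ (1/2:ℝ)) (fun m => c m ^ (1/2:ℝ) * d (i - m))
    have e1 : ∀ x : ℝ≥0∞, (x ^ (1/2:ℝ)) ^ 2 = x := by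
      intro x
      rw [← ENNReal.rpow_natCast (x ^ (1/2:ℝ)) 2, ← ENNReal.rpow_mul]
      norm_num
    calc (∑' m, c m * d (i - m)) ^ 2
        = (∑' m, (c m ^ (1/2:ℝ)) * ((c m ^ (1/2:ℝ)) * d (i - m))) ^ 2 := by
          congr 1; exact tsum_congr h1
      _ ≤ (∑' m, (c m ^ (1/2:ℝ)) ^ 2) * (∑' m, ((c m ^ (1/2:ℝ)) * d (i - m)) ^ 2) := h2
      _ = (∑' m, c m) * (∑' m, c m * d (i - m) ^ 2) := by
          congr 1
          · exact tsum_congr fun m => e1 _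
          · exact tsum_congr fun m => by rw [mul_pow, e1]
  calc ∑' i, (∑' m, c m * d (i - m)) ^ 2
      ≤ ∑' i, (∑' m, c m) * (∑' m, c m * d (i - m) ^ 2) := Summable.tsum_le_tsum key ENNReal.summable ENNReal.summable
    _ = (∑' m, c m) * ∑' i, ∑' m, c m * d (i - m) ^ 2 := ENNReal.tsum_mul_left
    _ = (∑' m, c m) * ∑' m, ∑' i, c m * d (i - m) ^ 2 := by rw [ENNReal.tsum_comm]
    _ = (∑' m, c m) * ∑' m, c m * ∑' i, d (i - m) ^ 2 := by
        congr 1; exact tsum_congr fun m => ENNReal.tsum_mul_left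
    _ = (∑' m, c m) * ∑' m, c m * ∑' j, d j ^ 2 := by
        congr 1; refine tsum_congr fun m => ?_
        congr 1; exact (Equiv.subRight m).tsum_eq (fun j => d j ^ 2)
    _ = ((∑' m, c m) ^ 2) * (∑' m, d m ^ 2) := by
        rw [ENNReal.tsum_mul_right, sq]; ring

open ENNReal MeasureTheory

lemma split_lemma (s δ : ℝ) (hs : 0 < s) (hδ : 0 < δ) (h2 : (1 + δ) ^ s ≤ 2)
    (x y : ℝ≥0∞) (hx1 : 1 ≤ x) (hy1 : 1 ≤ y) (hxt : x ≠ ⊤) (hyt : y ≠ ⊤) :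
    (x + y) ^ s ≤ 2 * y ^ s + ENNReal.ofReal ((1 + δ⁻¹) ^ s) * x ^ s := by
  set d : ℝ≥0∞ := ENNReal.ofReal δ with hd
  have hd0 : d ≠ 0 := by simp [hd, hδ, ne_of_gt]
  have hdt : d ≠ ⊤ := ofReal_ne_top
  rcases le_total x (d * y) with hcase | hcase
  · have h3 : x + y ≤ (d + 1) * y := by
      rw [add_mul, one_mul]; exact add_le_add_left hcase y
    have h4 : (x + y) ^ s ≤ ((d + 1) * y) ^ s := ENNReal.rpow_le_rpow h3 hs.le
    have h5 : ((d + 1) * y) ^ s = (d + 1) ^ s * y ^ s :=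
      ENNReal.mul_rpow_of_nonneg _ _ hs.le
    have h6 : (d + 1) ^ s ≤ 2 := by
      have e1 : d + 1 = ENNReal.ofReal (1 + δ) := by
        rw [ENNReal.ofReal_add (by norm_num) hδ.le]; simp [hd, add_comm]
      rw [e1, ENNReal.ofReal_rpow_of_pos (by linarith)]
      calc ENNReal.ofReal ((1 + δ) ^ s) ≤ ENNReal.ofReal 2 := ENNReal.ofReal_le_ofReal h2
        _ = 2 := by norm_num
    calc (x + y) ^ s ≤ (d + 1) ^ s * y ^ s := h4.trans (le_of_eq h5)
      _ ≤ 2 * y ^ s := mul_le_mul_left h6 _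
      _ ≤ _ := le_self_add
  · have h3 : y ≤ d⁻¹ * x := by
      calc y = d⁻¹ * (d * y) := by rw [← mul_assoc, ENNReal.inv_mul_cancel hd0 hdt, one_mul]
        _ ≤ d⁻¹ * x := mul_le_mul_right hcase _
    have h4 : x + y ≤ (1 + d⁻¹) * x := by
      rw [add_mul, one_mul]; exact add_le_add_right h3 x
    have h5 : (1 + d⁻¹) ^ s = ENNReal.ofReal ((1 + δ⁻¹) ^ s) := by
      have e1 : (1 : ℝ≥0∞) + d⁻¹ = ENNReal.ofReal (1 + δ⁻¹) := by
        rw [ENNReal.ofReal_add (by norm_num) (by positivity), hd,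
          ← ENNReal.ofReal_inv_of_pos hδ]; norm_num
      rw [e1, ENNReal.ofReal_rpow_of_pos (by positivity)]
    calc (x + y) ^ s ≤ ((1 + d⁻¹) * x) ^ s := ENNReal.rpow_le_rpow h4 hs.le
      _ = (1 + d⁻¹) ^ s * x ^ s := ENNReal.mul_rpow_of_nonneg _ _ hs.le
      _ = ENNReal.ofReal ((1 + δ⁻¹) ^ s) * x ^ s := by rw [h5]
      _ ≤ _ := le_add_self


open ENNReal MeasureTheory


lemma summable_wt1 {p : ℝ} (hp : 1 < p) :
    Summable fun n : ℤ => (wt1 n : ℝ) ^ (-p) := by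
  have hbase := Real.summable_abs_int_rpow hp
  have haux : Summable fun n : ℤ => |(n : ℝ)| ^ (-p) + if n = 0 then (1:ℝ) else 0 := by
    refine hbase.add ?_
    apply summable_of_ne_finset_zero (s := {0})
    intro n hn
    simp at hn
    simp [hn]
  refine haux.of_nonneg_of_le (fun n => by positivity) (fun n => ?_)
  by_cases hn : n = 0
  · subst hn
    simp [wt1, Real.zero_rpow (by linarith : -p ≠ 0)]
  · have h1 : wt1 n = n.natAbs := by
      have : 1 ≤ n.natAbs := Int.natAbs_pos.mpr hn
      simp [wt1, this]
    rw [h1]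
    have h2 : (n.natAbs : ℝ) = |(n : ℝ)| := by
      rw [Nat.cast_natAbs]; push_cast; ring_nf
    rw [h2]
    simp [hn]

lemma lam1_ne_top {p : ℝ} (hp : 1 < p) :
    (∑' n : ℤ, ((wt1 n : ℝ≥0∞)) ^ (-p)) ≠ ⊤ := by
  have hconv : ∀ n : ℤ, ((wt1 n : ℝ≥0∞)) ^ (-p) = ENNReal.ofReal ((wt1 n : ℝ) ^ (-p)) := by
    intro n
    rw [← ENNReal.ofReal_rpow_of_pos (by exact_mod_cast (one_le_wt1 n).trans_lt' zero_lt_one)]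
    congr 1
    simp [ENNReal.ofReal_natCast]
  rw [tsum_congr hconv, ← ENNReal.ofReal_tsum_of_nonneg (fun n => by positivity) (summable_wt1 hp)]
  exact ofReal_ne_top

lemma tsum_pi_prod (b : ℕ) (f : ℤ → ℝ≥0∞) :
    (∑' i : Fin b → ℤ, ∏ t, f (i t)) = (∑' n : ℤ, f n) ^ b := by
  induction b with
  | zero =>
    haveI : Unique (Fin 0 → ℤ) := ⟨⟨fun t => t.elim0⟩, fun a => funext fun t => t.elim0⟩
    rw [pow_zero, tsum_eq_single (default : Fin 0 → ℤ)
      (fun j hj => absurd (Subsingleton.elim j default) hj)]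
    simp
  | succ b ih =>
    rw [← (Fin.consEquiv (fun _ : Fin (b + 1) => ℤ)).tsum_eq fun i => ∏ t, f (i t)]
    have : ∀ p : ℤ × (Fin b → ℤ), (∏ t, f (((Fin.consEquiv (fun _ : Fin (b + 1) => ℤ)) p) t))
        = f p.1 * ∏ t, f (p.2 t) := by
      intro p
      rw [Fin.prod_univ_succ]
      simp [Fin.consEquiv]
    rw [tsum_congr this, ENNReal.tsum_prod']
    simp_rw [ENNReal.tsum_mul_left]
    rw [ENNReal.tsum_mul_right, ih, pow_succ, mul_comm]



lemma lam_ne_top (b : ℕ) (hb : 1 ≤ b) (s0 : ℝ) (hs0 : (b : ℝ) / 2 < s0) :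
    (∑' i : Fin b → ℤ, ((wt i : ℝ≥0∞)) ^ (-(2 * s0))) ≠ ⊤ := by
  have hb0 : (0:ℝ) < b := by exact_mod_cast hb
  set q : ℝ := 2 * s0 / b with hqdef
  have hq : 1 < q := by rw [hqdef]; rw [lt_div_iff₀ hb0]; linarith
  have hq0 : 0 ≤ q := by linarith
  have hqb : q * b = 2 * s0 := by rw [hqdef]; field_simp
  have hpt : ∀ i : Fin b → ℤ, ((wt i : ℝ≥0∞)) ^ (-(2 * s0))
      ≤ ∏ t, ((wt1 (i t) : ℝ≥0∞)) ^ (-q) := by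
    intro i
    have e1 : ∀ t : Fin b, ((wt1 (i t) : ℝ≥0∞)) ^ (-q) = (((wt1 (i t) : ℝ≥0∞)) ^ q)⁻¹ :=
      fun t => ENNReal.rpow_neg _ _
    rw [Finset.prod_congr rfl (fun t _ => e1 t), ← ENNReal.prod_inv_distrib (by
      intro t _ u _ _
      left
      exact (ENNReal.rpow_pos (by exact_mod_cast (one_le_wt1 (i t)).trans_lt' zero_lt_one)
        (natCast_ne_top _)).ne'), ENNReal.rpow_neg]
    apply ENNReal.inv_le_inv.mpr
    calc (∏ t, ((wt1 (i t) : ℝ≥0∞)) ^ q) ≤ ∏ _t : Fin b, ((wt i : ℝ≥0∞)) ^ q := by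
          apply Finset.prod_le_prod'
          intro t _
          exact ENNReal.rpow_le_rpow (by exact_mod_cast wt1_le_wt i t) hq0
      _ = (((wt i : ℝ≥0∞)) ^ q) ^ (b : ℕ) := by
          rw [Finset.prod_const, Finset.card_univ, Fintype.card_fin]
      _ = ((wt i : ℝ≥0∞)) ^ (2 * s0) := by
          rw [← ENNReal.rpow_natCast (((wt i : ℝ≥0∞)) ^ q) b, ← ENNReal.rpow_mul, hqb]
  have h2 := Summable.tsum_le_tsum hpt ENNReal.summable ENNReal.summable
  rw [tsum_pi_prod b (fun n => ((wt1 n : ℝ≥0∞)) ^ (-q))] at h2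
  exact ne_top_of_le_ne_top (pow_ne_top (lam1_ne_top hq)) h2









noncomputable def eS (b : ℕ) (s : ℝ) (u : (Fin b → ℤ) → ℂ) : ℝ≥0∞ :=
  ∑' i : Fin b → ℤ, (‖u i‖₊ : ℝ≥0∞) ^ 2 * ((wt i : ℝ≥0∞)) ^ (2 * s)

lemma wt_ne_zero {b : ℕ} (i : Fin b → ℤ) : ((wt i : ℝ≥0)) ≠ 0 := by
  have := one_le_wt i; positivity

lemma eS_term_eq (b : ℕ) (s : ℝ) (u : (Fin b → ℤ) → ℂ) (i : Fin b → ℤ) :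
    (‖u i‖₊ : ℝ≥0∞) ^ 2 * ((wt i : ℝ≥0∞)) ^ (2 * s)
      = ((‖u i‖₊ ^ 2 * ((wt i : ℝ≥0)) ^ (2 * s) : ℝ≥0) : ℝ≥0∞) := by
  have h : ((wt i : ℝ≥0∞)) = (((wt i : ℝ≥0)) : ℝ≥0∞) := by norm_cast
  rw [h, ENNReal.coe_mul, ENNReal.coe_pow, ← ENNReal.coe_rpow_of_ne_zero (wt_ne_zero i)]

lemma real_term_eq (b : ℕ) (s : ℝ) (u : (Fin b → ℤ) → ℂ) (i : Fin b → ℤ) :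
    ‖u i‖ ^ 2 * (wt i : ℝ) ^ (2 * s)
      = ((‖u i‖₊ ^ 2 * ((wt i : ℝ≥0)) ^ (2 * s) : ℝ≥0) : ℝ) := by
  push_cast [NNReal.coe_rpow]
  rfl

lemma hfn_iff (b : ℕ) (s : ℝ) (u : (Fin b → ℤ) → ℂ) :
    HasFiniteNorm b s u ↔ eS b s u ≠ ⊤ := by
  unfold HasFiniteNorm eS
  rw [tsum_congr (eS_term_eq b s u), ENNReal.tsum_coe_ne_top_iff_summable]
  constructor
  · intro h
    rw [← NNReal.summable_coe]
    exact h.congr fun i => (real_term_eq b s u i)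
  · intro h
    exact (NNReal.summable_coe.mpr h).congr fun i => (real_term_eq b s u i).symm

lemma wNormSq_eq (b : ℕ) (K0 s : ℝ) (u : (Fin b → ℤ) → ℂ) :
    wNormSq b K0 s u = K0 * (eS b s u).toReal := by
  unfold wNormSq eS
  congr 1
  rw [ENNReal.tsum_toReal_eq (fun i => by rw [eS_term_eq]; exact coe_ne_top)]
  refine tsum_congr fun i => ?_
  rw [real_term_eq b s u i, eS_term_eq]
  simp

lemma enorm_tsum_le {α : Type*} [Countable α] (f : α → ℂ) :
    (‖∑' i, f i‖₊ : ℝ≥0∞) ≤ ∑' i, (‖f i‖₊ : ℝ≥0∞) := by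
  by_cases hs : Summable fun i => ‖f i‖₊
  · have hsum : Summable f := by
      apply Summable.of_norm
      exact NNReal.summable_coe.mpr hs
    rw [← ENNReal.coe_tsum hs]
    exact ENNReal.coe_le_coe.mpr (nnnorm_tsum_le hs)
  · have hT : (∑' i, ((‖f i‖₊ : ℝ≥0∞))) = ⊤ := by
      by_contra h
      exact hs (ENNReal.tsum_coe_ne_top_iff_summable.mp h)
    rw [hT]
    exact le_top


section Master
variable {b : ℕ}

-- rpow square identity
lemma rpow_sq (x : ℝ≥0∞) (a : ℝ) : (x ^ a) ^ 2 = x ^ (2 * a) := by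
  rw [← ENNReal.rpow_natCast (x ^ a) 2, ← ENNReal.rpow_mul, mul_comm]
  norm_num

lemma one_le_W (i : Fin b → ℤ) : (1 : ℝ≥0∞) ≤ (wt i : ℝ≥0∞) := by
  exact_mod_cast one_le_wt i

lemma ell1_sq_le (s0 : ℝ) (w : (Fin b → ℤ) → ℂ) :
    (∑' m : Fin b → ℤ, (‖w m‖₊ : ℝ≥0∞)) ^ 2
      ≤ (∑' i : Fin b → ℤ, ((wt i : ℝ≥0∞)) ^ (-(2 * s0))) * eS b s0 w := by
  have key : ∀ m : Fin b → ℤ, (‖w m‖₊ : ℝ≥0∞)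
      = ((wt m : ℝ≥0∞)) ^ (-s0) * ((‖w m‖₊ : ℝ≥0∞) * ((wt m : ℝ≥0∞)) ^ s0) := by
    intro m
    have hW0 : ((wt m : ℝ≥0∞)) ≠ 0 := by
      have : (0:ℕ) < wt m := one_le_wt m
      exact_mod_cast this.ne'
    rw [mul_comm (‖w m‖₊ : ℝ≥0∞), ← mul_assoc,
      ← ENNReal.rpow_add _ _ hW0 (natCast_ne_top _)]
    norm_num
  calc (∑' m : Fin b → ℤ, (‖w m‖₊ : ℝ≥0∞)) ^ 2
      = (∑' m : Fin b → ℤ, ((wt m : ℝ≥0∞)) ^ (-s0) * ((‖w m‖₊ : ℝ≥0∞) * ((wt m : ℝ≥0∞)) ^ s0)) ^ 2 := by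
        rw [tsum_congr key]
    _ ≤ (∑' m : Fin b → ℤ, (((wt m : ℝ≥0∞)) ^ (-s0)) ^ 2)
        * (∑' m : Fin b → ℤ, ((‖w m‖₊ : ℝ≥0∞) * ((wt m : ℝ≥0∞)) ^ s0) ^ 2) := tsum_CS_sq _ _
    _ = (∑' i : Fin b → ℤ, ((wt i : ℝ≥0∞)) ^ (-(2 * s0))) * eS b s0 w := by
        congr 1
        · refine tsum_congr fun m => ?_
          rw [rpow_sq]; ring_nf
        · refine tsum_congr fun m => ?_
          rw [mul_pow, rpow_sq]

lemma inner_sum_le (s : ℝ) (hs : 0 ≤ s) (u v : (Fin b → ℤ) → ℂ) (i : Fin b → ℤ) :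
    (∑' m : Fin b → ℤ, (‖u m‖₊ : ℝ≥0∞) * (‖v (i - m)‖₊ : ℝ≥0∞)) ≤ eS b s u + eS b s v := by
  have hpt : ∀ m : Fin b → ℤ, (‖u m‖₊ : ℝ≥0∞) * (‖v (i - m)‖₊ : ℝ≥0∞)
      ≤ (‖u m‖₊ : ℝ≥0∞) ^ 2 * ((wt m : ℝ≥0∞)) ^ (2 * s)
        + (‖v (i - m)‖₊ : ℝ≥0∞) ^ 2 * ((wt (i - m) : ℝ≥0∞)) ^ (2 * s) := by
    intro m
    refine le_trans (ENN.mul_le_sq_add _ _) (add_le_add ?_ ?_) <;>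
    · apply le_mul_of_one_le_right'
      calc (1:ℝ≥0∞) = 1 ^ (2 * s) := (ENNReal.one_rpow _).symm
        _ ≤ _ := ENNReal.rpow_le_rpow (one_le_W _) (by linarith)
  calc (∑' m : Fin b → ℤ, (‖u m‖₊ : ℝ≥0∞) * (‖v (i - m)‖₊ : ℝ≥0∞))
      ≤ ∑' m : Fin b → ℤ, ((‖u m‖₊ : ℝ≥0∞) ^ 2 * ((wt m : ℝ≥0∞)) ^ (2 * s)
        + (‖v (i - m)‖₊ : ℝ≥0∞) ^ 2 * ((wt (i - m) : ℝ≥0∞)) ^ (2 * s)) :=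
        Summable.tsum_le_tsum hpt ENNReal.summable ENNReal.summable
    _ = eS b s u + ∑' m : Fin b → ℤ, (‖v (i - m)‖₊ : ℝ≥0∞) ^ 2 * ((wt (i - m) : ℝ≥0∞)) ^ (2 * s) :=
        ENNReal.tsum_add
    _ = eS b s u + eS b s v := by
        congr 1
        exact (Equiv.subLeft i).tsum_eq fun j => (‖v j‖₊ : ℝ≥0∞) ^ 2 * ((wt j : ℝ≥0∞)) ^ (2 * s)

lemma master (hb : 1 ≤ b) (s0 s δ : ℝ) (hs00 : 0 < s0) (hss : s0 ≤ s)
    (hδ : 0 < δ) (h2 : (1 + δ) ^ s ≤ 2) (u v : (Fin b → ℤ) → ℂ) :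
    eS b s (conv b u v)
      ≤ 16 * (∑' i : Fin b → ℤ, ((wt i : ℝ≥0∞)) ^ (-(2 * s0))) * (eS b s0 u * eS b s v)
        + 4 * ENNReal.ofReal ((1 + δ⁻¹) ^ s) ^ 2
          * (∑' i : Fin b → ℤ, ((wt i : ℝ≥0∞)) ^ (-(2 * s0))) * (eS b s0 v * eS b s u) := by
  have hs : 0 < s := lt_of_lt_of_le hs00 hss
  set F : (Fin b → ℤ) → ℝ≥0∞ := fun m => (‖u m‖₊ : ℝ≥0∞) with hF
  set G : (Fin b → ℤ) → ℝ≥0∞ := fun m => (‖v m‖₊ : ℝ≥0∞) with hG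
  set W : (Fin b → ℤ) → ℝ≥0∞ := fun i => ((wt i : ℝ≥0∞)) with hW
  set Lam : ℝ≥0∞ := ∑' i : Fin b → ℤ, ((wt i : ℝ≥0∞)) ^ (-(2 * s0)) with hLam
  set D : ℝ≥0∞ := ENNReal.ofReal ((1 + δ⁻¹) ^ s) with hD
  set T' : (Fin b → ℤ) → ℝ≥0∞ := fun i => ∑' m, F m * (G (i - m) * W (i - m) ^ s) with hT'
  set T : (Fin b → ℤ) → ℝ≥0∞ := fun i => ∑' m, (F m * W m ^ s) * G (i - m) with hT
  -- step 1: nnnorm of conv bounded by sum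
  have step1 : ∀ i, (‖conv b u v i‖₊ : ℝ≥0∞) ≤ ∑' m, F m * G (i - m) := by
    intro i
    refine le_trans (enorm_tsum_le _) (le_of_eq (tsum_congr fun m => ?_))
    rw [nnnorm_mul, ENNReal.coe_mul]
  -- step 2: pointwise split of the weight
  have step2 : ∀ i m, W i ^ s ≤ 2 * W (i - m) ^ s + D * W m ^ s := by
    intro i m
    have h3 : W i ≤ W m + W (i - m) := by
      show ((wt i : ℝ≥0∞)) ≤ ((wt m : ℝ≥0∞)) + ((wt (i - m) : ℝ≥0∞))
      exact_mod_cast wt_triangle i m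
    calc W i ^ s ≤ (W m + W (i - m)) ^ s := ENNReal.rpow_le_rpow h3 hs.le
      _ ≤ 2 * W (i - m) ^ s + D * W m ^ s :=
        split_lemma s δ hs hδ h2 _ _ (one_le_W m) (one_le_W (i - m))
          (natCast_ne_top _) (natCast_ne_top _)
  -- step 3: inner sum with weight split
  have step3 : ∀ i, (∑' m, (F m * G (i - m)) * W i ^ s) ≤ 2 * T' i + D * T i := by
    intro i
    calc (∑' m, (F m * G (i - m)) * W i ^ s)
        ≤ ∑' m, (F m * G (i - m)) * (2 * W (i - m) ^ s + D * W m ^ s) := by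
          refine Summable.tsum_le_tsum (fun m => mul_le_mul_right (step2 i m) _)
            ENNReal.summable ENNReal.summable
      _ = ∑' m, (2 * (F m * (G (i - m) * W (i - m) ^ s)) + D * ((F m * W m ^ s) * G (i - m))) := by
          refine tsum_congr fun m => ?_
          ring
      _ = 2 * T' i + D * T i := by
          rw [ENNReal.tsum_add, ENNReal.tsum_mul_left, ENNReal.tsum_mul_left]
  -- step 4: Young for T'
  have step4 : (∑' i, T' i ^ 2) ≤ Lam * eS b s0 u * eS b s v := by
    have hy := young F (fun j => G j * W j ^ s)
    have he : (∑' m, (G m * W m ^ s) ^ 2) = eS b s v := by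
      refine tsum_congr fun m => ?_
      rw [mul_pow, rpow_sq]
    rw [he] at hy
    calc (∑' i, T' i ^ 2) ≤ (∑' m, F m) ^ 2 * eS b s v := hy
      _ ≤ (Lam * eS b s0 u) * eS b s v := mul_le_mul_left (ell1_sq_le s0 u) _
      _ = Lam * eS b s0 u * eS b s v := by ring
  -- step 5: Young for T
  have step5 : (∑' i, T i ^ 2) ≤ Lam * eS b s0 v * eS b s u := by
    have hrw : ∀ i, T i = ∑' m, G m * ((fun j => F j * W j ^ s) (i - m)) := by
      intro i
      show (∑' m, (F m * W m ^ s) * G (i - m)) = _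
      rw [← (Equiv.subLeft i).tsum_eq (fun m => (F m * W m ^ s) * G (i - m))]
      refine tsum_congr fun k => ?_
      simp [mul_comm]
    have hy := young G (fun j => F j * W j ^ s)
    have he : (∑' m, (F m * W m ^ s) ^ 2) = eS b s u := by
      refine tsum_congr fun m => ?_
      rw [mul_pow, rpow_sq]
    rw [he] at hy
    calc (∑' i, T i ^ 2) = ∑' i, (∑' m, G m * ((fun j => F j * W j ^ s) (i - m))) ^ 2 := by
          refine tsum_congr fun i => ?_
          rw [hrw i]
      _ ≤ (∑' m, G m) ^ 2 * eS b s u := hy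
      _ ≤ (Lam * eS b s0 v) * eS b s u := mul_le_mul_left (ell1_sq_le s0 v) _
      _ = Lam * eS b s0 v * eS b s u := by ring
  -- main chain
  calc eS b s (conv b u v)
      = ∑' i, (‖conv b u v i‖₊ : ℝ≥0∞) ^ 2 * W i ^ (2 * s) := rfl
    _ ≤ ∑' i, (∑' m, F m * G (i - m)) ^ 2 * W i ^ (2 * s) := by
        refine Summable.tsum_le_tsum (fun i => mul_le_mul_left (pow_le_pow_left' (step1 i) 2) _)
          ENNReal.summable ENNReal.summable
    _ = ∑' i, (∑' m, (F m * G (i - m)) * W i ^ s) ^ 2 := by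
        refine tsum_congr fun i => ?_
        rw [ENNReal.tsum_mul_right, mul_pow, rpow_sq]
    _ ≤ ∑' i, (2 * T' i + D * T i) ^ 2 := by
        refine Summable.tsum_le_tsum (fun i => pow_le_pow_left' (step3 i) 2)
          ENNReal.summable ENNReal.summable
    _ ≤ ∑' i, (4 * (2 * T' i) ^ 2 + 4 * (D * T i) ^ 2) := by
        refine Summable.tsum_le_tsum (fun i => ENN.add_sq_le _ _) ENNReal.summable ENNReal.summable
    _ = 16 * (∑' i, T' i ^ 2) + 4 * D ^ 2 * (∑' i, T i ^ 2) := by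
        rw [ENNReal.tsum_add]
        congr 1
        · rw [← ENNReal.tsum_mul_left]
          refine tsum_congr fun i => ?_
          ring
        · rw [← ENNReal.tsum_mul_left]
          refine tsum_congr fun i => ?_
          ring
    _ ≤ 16 * (Lam * eS b s0 u * eS b s v) + 4 * D ^ 2 * (Lam * eS b s0 v * eS b s u) := by
        exact add_le_add (mul_le_mul_right step4 _) (mul_le_mul_right step5 _)
    _ = 16 * Lam * (eS b s0 u * eS b s v) + 4 * D ^ 2 * Lam * (eS b s0 v * eS b s u) := by
        ring

end Master

lemma eS_mono (b : ℕ) {s t : ℝ} (h : s ≤ t) (u : (Fin b → ℤ) → ℂ) :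
    eS b s u ≤ eS b t u := by
  refine Summable.tsum_le_tsum (fun i => mul_le_mul_right ?_ _) ENNReal.summable ENNReal.summable
  exact ENNReal.rpow_le_rpow_of_exponent_le (one_le_W i) (by linarith)

lemma sqrt_add_le (x y : ℝ) (hx : 0 ≤ x) (hy : 0 ≤ y) :
    Real.sqrt (x + y) ≤ Real.sqrt x + Real.sqrt y := by
  have h : x + y ≤ (Real.sqrt x + Real.sqrt y) ^ 2 := by
    have hxx := Real.sq_sqrt hx
    have hyy := Real.sq_sqrt hy
    nlinarith [mul_nonneg (Real.sqrt_nonneg x) (Real.sqrt_nonneg y)]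
  calc Real.sqrt (x + y) ≤ Real.sqrt ((Real.sqrt x + Real.sqrt y) ^ 2) := Real.sqrt_le_sqrt h
    _ = Real.sqrt x + Real.sqrt y :=
        Real.sqrt_sq (add_nonneg (Real.sqrt_nonneg x) (Real.sqrt_nonneg y))

lemma half_sqrt_mul (c z w : ℝ) (hc : 0 ≤ c) (hz : 0 ≤ z) :
    (c / 2) * Real.sqrt z * Real.sqrt w = Real.sqrt ((c / 2) ^ 2 * (z * w)) := by
  rw [Real.sqrt_mul (by positivity), Real.sqrt_mul hz, Real.sqrt_sq (by positivity)]
  ring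



set_option maxHeartbeats 1000000 in
theorem interpolation_inequality
    (b : ℕ) (hb : 1 ≤ b) (s0 : ℝ) (hs0 : (b : ℝ) / 2 < s0)
    (s1 : ℝ) (hs1 : s0 ≤ s1) :
    ∃ K0 : ℝ, 1 ≤ K0 ∧ ∃ C : ℝ → ℝ,
      (∀ s, s0 ≤ s → 1 ≤ C s) ∧ C s0 = 1 ∧
      (∀ s, s0 ≤ s → s ≤ s1 → C s = 1) ∧
      ∀ s, s0 ≤ s → ∀ u v : (Fin b → ℤ) → ℂ,
        HasFiniteNorm b s u → HasFiniteNorm b s v →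
        (∀ i, Summable fun m : Fin b → ℤ => ‖u m‖ * ‖v (i - m)‖) ∧
        HasFiniteNorm b s (conv b u v) ∧
        wNorm b K0 s (conv b u v) ≤
          (1 / 2) * wNorm b K0 s0 u * wNorm b K0 s v
            + (C s / 2) * wNorm b K0 s u * wNorm b K0 s0 v := by
  have hbR : (1:ℝ) ≤ b := by exact_mod_cast hb
  have hs00 : 0 < s0 := by linarith
  have hs10 : 0 < s1 := lt_of_lt_of_le hs00 hs1
  -- the constant Λ
  set LamE : ℝ≥0∞ := ∑' i : Fin b → ℤ, ((wt i : ℝ≥0∞)) ^ (-(2 * s0)) with hLamE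
  have hLam_ne : LamE ≠ ⊤ := lam_ne_top b hb s0 hs0
  have hLam_ge : 1 ≤ LamE := by
    have h0 : ((wt (0 : Fin b → ℤ) : ℝ≥0∞)) ^ (-(2 * s0)) ≤ LamE := ENNReal.le_tsum 0
    have hwt0 : wt (0 : Fin b → ℤ) = 1 := by simp [wt]
    rwa [hwt0, Nat.cast_one, ENNReal.one_rpow] at h0
  set Lr : ℝ := LamE.toReal with hLr
  have hLr1 : 1 ≤ Lr := by
    have := ENNReal.toReal_mono hLam_ne hLam_ge
    simpa using this
  have hLr0 : 0 < Lr := by linarith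
  -- the parameter functions
  set sm : ℝ → ℝ := fun s => max s s1 with hsm
  have hsm_pos : ∀ s, 0 < sm s := fun s => lt_of_lt_of_le hs10 (le_max_right s s1)
  set δf : ℝ → ℝ := fun s => 2 ^ (1 / sm s) - 1 with hδf
  have hbase : ∀ s, 1 < (2:ℝ) ^ (1 / sm s) := by
    intro s
    have h1 : 0 < 1 / sm s := by positivity
    calc (1:ℝ) = 2 ^ (0:ℝ) := (Real.rpow_zero 2).symm
      _ < 2 ^ (1 / sm s) := Real.rpow_lt_rpow_of_exponent_lt one_lt_two h1
  have hδpos : ∀ s, 0 < δf s := fun s => by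
    have := hbase s; simp only [hδf]; linarith
  have hsplit2 : ∀ s, s0 ≤ s → (1 + δf s) ^ s ≤ 2 := by
    intro s hs
    have h1 : 1 + δf s = 2 ^ (1 / sm s) := by simp [hδf]
    rw [h1, ← Real.rpow_mul (by norm_num : (0:ℝ) ≤ 2)]
    have h2 : 1 / sm s * s ≤ 1 := by
      rw [div_mul_eq_mul_div, one_mul, div_le_one (hsm_pos s)]
      exact le_max_left s s1
    calc (2:ℝ) ^ (1 / sm s * s) ≤ 2 ^ (1:ℝ) := Real.rpow_le_rpow_of_exponent_le one_le_two h2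
      _ = 2 := Real.rpow_one 2
  set Df : ℝ → ℝ := fun s => (1 + (δf s)⁻¹) ^ s with hDf
  have hDf1 : ∀ s, s0 ≤ s → 1 ≤ Df s := by
    intro s hs
    have h1 : (1:ℝ) ≤ 1 + (δf s)⁻¹ := by
      have := hδpos s; have : 0 < (δf s)⁻¹ := by positivity
      linarith
    calc (1:ℝ) = 1 ^ s := (Real.one_rpow s).symm
      _ ≤ (1 + (δf s)⁻¹) ^ s := Real.rpow_le_rpow (by norm_num) h1 (by linarith)
  have hDmono : ∀ s, s0 ≤ s → s ≤ s1 → Df s ≤ Df s1 := by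
    intro s hs hs'
    have he : sm s = sm s1 := by
      simp only [hsm]
      rw [max_eq_right hs', max_eq_right le_rfl]
    have h1 : (1:ℝ) ≤ 1 + (δf s)⁻¹ := by
      have := hδpos s; have : 0 < (δf s)⁻¹ := by positivity
      linarith
    simp only [hDf, hδf]
    rw [← he]
    exact Real.rpow_le_rpow_of_exponent_le h1 hs'
  set D1 : ℝ := Df s1 with hD1
  have hD1ge : 1 ≤ D1 := hDf1 s1 hs1
  set K0 : ℝ := 64 * Lr * D1 ^ 2 with hK0
  have hK0ge : 1 ≤ K0 := by nlinarith
  have hK0pos : 0 < K0 := by linarith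
  set C : ℝ → ℝ := fun s => max 1 (4 * Df s * Real.sqrt (Lr / K0)) with hC
  have hCge : ∀ s, s0 ≤ s → 1 ≤ C s := fun s _ => le_max_left _ _
  have hCone : ∀ s, s0 ≤ s → s ≤ s1 → C s = 1 := by
    intro s hs hs'
    have hds := hDf1 s hs
    have hdm := hDmono s hs hs'
    apply max_eq_left
    have h1 : Real.sqrt (Lr / K0) ≤ 1 / (8 * D1) := by
      have harg : Lr / K0 ≤ (1 / (8 * D1)) ^ 2 := by
        rw [hK0]
        rw [div_le_iff₀ (by nlinarith)]
        have : (1 / (8*D1))^2 = 1/(64 * D1^2) := by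
          field_simp; ring
        rw [this]
        rw [one_div, inv_mul_eq_div, le_div_iff₀ (by nlinarith)]
        nlinarith
      calc Real.sqrt (Lr / K0) ≤ Real.sqrt ((1 / (8 * D1)) ^ 2) := Real.sqrt_le_sqrt harg
        _ = 1 / (8 * D1) := Real.sqrt_sq (by positivity)
    calc 4 * Df s * Real.sqrt (Lr / K0) ≤ 4 * Df s * (1 / (8 * D1)) := by
          apply mul_le_mul_of_nonneg_left h1 (by nlinarith)
      _ = Df s / (2 * D1) := by ring
      _ ≤ 1 := by
          rw [div_le_one (by nlinarith)]
          nlinarith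
  refine ⟨K0, hK0ge, C, hCge, hCone s0 le_rfl hs1, hCone, ?_⟩
  intro s hs u v hu hv
  have hspos : 0 < s := lt_of_lt_of_le hs00 hs
  have heu : eS b s u ≠ ⊤ := (hfn_iff b s u).mp hu
  have hev : eS b s v ≠ ⊤ := (hfn_iff b s v).mp hv
  have heu0 : eS b s0 u ≠ ⊤ := ne_top_of_le_ne_top heu (eS_mono b hs u)
  have hev0 : eS b s0 v ≠ ⊤ := ne_top_of_le_ne_top hev (eS_mono b hs v)
  -- summability of the convolution terms
  have hsummable : ∀ i, Summable fun m : Fin b → ℤ => ‖u m‖ * ‖v (i - m)‖ := by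
    intro i
    have hfin : (∑' m : Fin b → ℤ, (‖u m‖₊ : ℝ≥0∞) * (‖v (i - m)‖₊ : ℝ≥0∞)) ≠ ⊤ :=
      ne_top_of_le_ne_top (ENNReal.add_ne_top.mpr ⟨heu, hev⟩)
        (inner_sum_le s hspos.le u v i)
    have := ENNReal.summable_toReal hfin
    refine this.congr fun m => ?_
    rw [ENNReal.toReal_mul]
    simp
  -- master bound
  have hmaster := master hb s0 s (δf s) hs00 hs (hδpos s) (hsplit2 s hs) u v
  set DE : ℝ≥0∞ := ENNReal.ofReal ((1 + (δf s)⁻¹) ^ s) with hDE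
  have hDE_eq : DE = ENNReal.ofReal (Df s) := rfl
  have hRHS_ne : (16 * LamE * (eS b s0 u * eS b s v)
      + 4 * DE ^ 2 * LamE * (eS b s0 v * eS b s u)) ≠ ⊤ := by
    apply ENNReal.add_ne_top.mpr
    constructor
    · exact ENNReal.mul_ne_top (ENNReal.mul_ne_top (by simp) hLam_ne)
        (ENNReal.mul_ne_top heu0 hev)
    · exact ENNReal.mul_ne_top (ENNReal.mul_ne_top
        (ENNReal.mul_ne_top (by simp) (by simp [hDE])) hLam_ne)
        (ENNReal.mul_ne_top hev0 heu)
  have hconv_fin : eS b s (conv b u v) ≠ ⊤ := ne_top_of_le_ne_top hRHS_ne hmaster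
  refine ⟨hsummable, (hfn_iff b s (conv b u v)).mpr hconv_fin, ?_⟩
  -- real versions
  set au : ℝ := (eS b s0 u).toReal with hau
  set bu : ℝ := (eS b s u).toReal with hbu
  set av : ℝ := (eS b s0 v).toReal with hav
  set bv : ℝ := (eS b s v).toReal with hbv
  have hau0 : 0 ≤ au := ENNReal.toReal_nonneg
  have hbu0 : 0 ≤ bu := ENNReal.toReal_nonneg
  have hav0 : 0 ≤ av := ENNReal.toReal_nonneg
  have hbv0 : 0 ≤ bv := ENNReal.toReal_nonneg
  have hDfpos : 0 < Df s := lt_of_lt_of_le zero_lt_one (hDf1 s hs)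
  have hx : (eS b s (conv b u v)).toReal
      ≤ 16 * Lr * (au * bv) + 4 * Df s ^ 2 * Lr * (av * bu) := by
    have h1 := ENNReal.toReal_mono hRHS_ne hmaster
    refine le_trans h1 (le_of_eq ?_)
    rw [ENNReal.toReal_add (by
        exact ENNReal.mul_ne_top (ENNReal.mul_ne_top (by simp) hLam_ne)
          (ENNReal.mul_ne_top heu0 hev)) (by
        exact ENNReal.mul_ne_top (ENNReal.mul_ne_top
          (ENNReal.mul_ne_top (by simp) (by simp [hDE])) hLam_ne)
          (ENNReal.mul_ne_top hev0 heu))]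
    simp only [ENNReal.toReal_mul, ENNReal.toReal_pow, hDE_eq,
      ENNReal.toReal_ofReal hDfpos.le, ENNReal.toReal_ofNat]
    try ring
  -- norms as square roots
  have hnorm : ∀ (t : ℝ) (w : (Fin b → ℤ) → ℂ),
      wNorm b K0 t w = Real.sqrt (K0 * (eS b t w).toReal) := by
    intro t w
    rw [wNorm, wNormSq_eq]
  rw [hnorm s (conv b u v), hnorm s0 u, hnorm s v, hnorm s u, hnorm s0 v]
  have hKau : K0 * au = K0 * au := rfl
  -- main numeric chain
  have hchain : Real.sqrt (K0 * (eS b s (conv b u v)).toReal)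
      ≤ Real.sqrt (16 * K0 * Lr * (au * bv)) + Real.sqrt (4 * Df s ^ 2 * K0 * Lr * (av * bu)) := by
    calc Real.sqrt (K0 * (eS b s (conv b u v)).toReal)
        ≤ Real.sqrt (K0 * (16 * Lr * (au * bv) + 4 * Df s ^ 2 * Lr * (av * bu))) := by
          apply Real.sqrt_le_sqrt
          exact mul_le_mul_of_nonneg_left hx hK0pos.le
      _ = Real.sqrt (16 * K0 * Lr * (au * bv) + 4 * Df s ^ 2 * K0 * Lr * (av * bu)) := by
          congr 1
          ring
      _ ≤ _ := by
          apply sqrt_add_le _ _ (by positivity) (by positivity)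
  refine le_trans hchain (add_le_add ?_ ?_)
  · -- first term
    rw [half_sqrt_mul 1 (K0 * au) (K0 * bv) (by norm_num) (by positivity)]
    apply Real.sqrt_le_sqrt
    have h64 : 64 * Lr ≤ K0 := by
      rw [hK0]
      have hD2 : 1 ≤ D1 ^ 2 := by nlinarith [hD1ge]
      have h := mul_le_mul_of_nonneg_left hD2 (by positivity : (0:ℝ) ≤ 64 * Lr)
      linarith
    nlinarith [mul_le_mul_of_nonneg_right h64 (show (0:ℝ) ≤ K0 * au * bv / 4 by positivity)]
  · -- second term
    rw [half_sqrt_mul (C s) (K0 * bu) (K0 * av) (le_trans zero_le_one (hCge s hs)) (by positivity)]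
    apply Real.sqrt_le_sqrt
    set r : ℝ := Real.sqrt (Lr / K0) with hrdef
    have hr0 : 0 ≤ r := Real.sqrt_nonneg _
    have hr2 : r ^ 2 = Lr / K0 := Real.sq_sqrt (by positivity)
    have hLreq : Lr = r ^ 2 * K0 := by rw [hr2]; field_simp
    have hCs : 4 * Df s * r ≤ C s := le_max_right _ _
    have hsq0 := pow_le_pow_left₀ (by positivity : (0:ℝ) ≤ 4 * Df s * r) hCs 2
    have hsq : 16 * Df s ^ 2 * r ^ 2 ≤ C s ^ 2 := by
      calc 16 * Df s ^ 2 * r ^ 2 = (4 * Df s * r) ^ 2 := by ring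
        _ ≤ C s ^ 2 := hsq0
    rw [hLreq]
    nlinarith [mul_le_mul_of_nonneg_right hsq
      (show (0:ℝ) ≤ K0 * K0 * bu * av / 4 by positivity)]
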